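/- The 5×5 Horn matrix W_1 with rows [1,−1,1,1,−1], [−1,1,−1,1,1], [1,−1,1,−1,1], [1,1,−1,1,−1], [−1,1,1,−1,1] is copositive, and the 5×5 density matrix ρ = (1/9)·[[1,1,0,0,1],[1,2,1,0,0],[0,1,2,1,0],[0,0,1,1,1],[1,0,0,1,3]] is doubly non-negative but satisfies Tr(W_1 ρ) = −1/9 < 0, and hence ρ is not a completely positive matrix. -/

import Mathlib

open Matrix BigOperators
open scoped ComplexOrder

namespace CPCPPaper

/-- A matrix is a *completely positive (CP) matrix* if it is a finite sum of outer products
`x xᵀ` of entrywise non-negative vectors. Here `0 ≤ z` in `ℂ` means that `z` is real and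
non-negative. -/
def IsCPMatrix {ι : Type*} [Fintype ι] (X : Matrix ι ι ℂ) : Prop :=
  ∃ (k : ℕ) (v : Fin k → ι → ℂ),
    (∀ j i, 0 ≤ v j i) ∧ X = ∑ j, Matrix.vecMulVec (v j) (v j)

/-- The CP-rank of a matrix: the minimal number of terms in a decomposition as a sum of
outer products of entrywise non-negative vectors. -/
noncomputable def cpRank {ι : Type*} [Fintype ι] (X : Matrix ι ι ℂ) : ℕ :=
  sInf {k : ℕ | ∃ v : Fin k → ι → ℂ,
    (∀ j i, 0 ≤ v j i) ∧ X = ∑ j, Matrix.vecMulVec (v j) (v j)}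

/-- A matrix is *doubly non-negative (DNN)* if it is positive semidefinite and all of its
entries are real and non-negative. -/
def IsDNNMatrix {ι : Type*} [Fintype ι] (X : Matrix ι ι ℂ) : Prop :=
  X.PosSemidef ∧ ∀ i j, 0 ≤ X i j

/-- The blockwise extension `I_k ⊗ Φ` of a map `Φ : M_n → M_m`. -/
def tensorExt {n m : ℕ} (k : ℕ)
    (Φ : Matrix (Fin n) (Fin n) ℂ → Matrix (Fin m) (Fin m) ℂ)
    (X : Matrix (Fin k × Fin n) (Fin k × Fin n) ℂ) :
    Matrix (Fin k × Fin m) (Fin k × Fin m) ℂ :=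
  Matrix.of fun p q => Φ (Matrix.of fun i j => X (p.1, i) (q.1, j)) p.2 q.2

/-- `Φ` is *completely positive completely positive (CPCP)* if `I_k ⊗ Φ` sends CP matrices
to CP matrices for every `k`. -/
def IsCPCP {n m : ℕ} (Φ : Matrix (Fin n) (Fin n) ℂ → Matrix (Fin m) (Fin m) ℂ) : Prop :=
  ∀ (k : ℕ) (X : Matrix (Fin k × Fin n) (Fin k × Fin n) ℂ),
    IsCPMatrix X → IsCPMatrix (tensorExt k Φ X)

/-- `Φ` is *completely positive doubly non-negative (CPDNN)* if `I_k ⊗ Φ` sends DNN matrices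
to DNN matrices for every `k`. -/
def IsCPDNN {n m : ℕ} (Φ : Matrix (Fin n) (Fin n) ℂ → Matrix (Fin m) (Fin m) ℂ) : Prop :=
  ∀ (k : ℕ) (X : Matrix (Fin k × Fin n) (Fin k × Fin n) ℂ),
    IsDNNMatrix X → IsDNNMatrix (tensorExt k Φ X)

/-- `Φ` is a *completely positive map* (in the superoperator sense) if `I_k ⊗ Φ` sends
positive semidefinite matrices to positive semidefinite matrices for every `k`. -/
def IsCPMap {n m : ℕ} (Φ : Matrix (Fin n) (Fin n) ℂ → Matrix (Fin m) (Fin m) ℂ) : Prop :=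
  ∀ (k : ℕ) (X : Matrix (Fin k × Fin n) (Fin k × Fin n) ℂ),
    X.PosSemidef → (tensorExt k Φ X).PosSemidef

/-- `Φ` is trace-preserving. -/
def IsTracePreserving {n m : ℕ}
    (Φ : Matrix (Fin n) (Fin n) ℂ → Matrix (Fin m) (Fin m) ℂ) : Prop :=
  ∀ X, (Φ X).trace = X.trace

/-- The Choi matrix `J(Φ) = ∑ᵢⱼ |i⟩⟨j| ⊗ Φ(|i⟩⟨j|)`. -/
def choiMatrix {n m : ℕ}
    (Φ : Matrix (Fin n) (Fin n) ℂ → Matrix (Fin m) (Fin m) ℂ) :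
    Matrix (Fin n × Fin m) (Fin n × Fin m) ℂ :=
  Matrix.of fun p q => Φ (Matrix.single p.1 q.1 1) p.2 q.2

/-- A *CP state*: a completely positive matrix with trace one. -/
def IsCPState {n : ℕ} (ρ : Matrix (Fin n) (Fin n) ℂ) : Prop :=
  IsCPMatrix ρ ∧ ρ.trace = 1

/-- `Φ` is *CP-preserving* if it maps CP states to CP states. -/
def IsCPPreserving {n m : ℕ}
    (Φ : Matrix (Fin n) (Fin n) ℂ → Matrix (Fin m) (Fin m) ℂ) : Prop :=
  ∀ ρ, IsCPState ρ → IsCPState (Φ ρ)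

/-- The Pauli matrix `X`. -/
def PauliX : Matrix (Fin 2) (Fin 2) ℂ := !![0, 1; 1, 0]

/-- The Pauli matrix `Y`. -/
def PauliY : Matrix (Fin 2) (Fin 2) ℂ := !![0, -Complex.I; Complex.I, 0]

/-- The Pauli matrix `Z`. -/
def PauliZ : Matrix (Fin 2) (Fin 2) ℂ := !![1, 0; 0, -1]

/-- The permutation matrix associated to a permutation. -/
def permMat {n : ℕ} (σ : Equiv.Perm (Fin n)) : Matrix (Fin n) (Fin n) ℂ :=
  Matrix.of fun i j => if i = σ j then 1 else 0

/-- The `5 × 5` Horn matrix. -/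
def hornMatrix : Matrix (Fin 5) (Fin 5) ℝ :=
  !![1, -1, 1, 1, -1;
     -1, 1, -1, 1, 1;
     1, -1, 1, -1, 1;
     1, 1, -1, 1, -1;
     -1, 1, 1, -1, 1]

/-- The `5 × 5` doubly non-negative but not completely positive density matrix. -/
noncomputable def rhoHN : Matrix (Fin 5) (Fin 5) ℂ :=
  (9 : ℂ)⁻¹ • !![1, 1, 0, 0, 1;
                 1, 2, 1, 0, 0;
                 0, 1, 2, 1, 0;
                 0, 0, 1, 1, 1;
                 1, 0, 0, 1, 3]


private lemma horn_copos :
    ∀ u : Fin 5 → ℝ, (∀ i, 0 ≤ u i) → 0 ≤ u ⬝ᵥ (hornMatrix.mulVec u) := by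
  intro u h
  have ha := h 0; have hb := h 1; have hc := h 2; have hd := h 3; have he := h 4
  simp [dotProduct, mulVec, hornMatrix, Fin.sum_univ_five, Matrix.vecHead, Matrix.vecTail]
  rcases le_total (u 3) (u 4) with hle | hle
  · nlinarith [sq_nonneg (u 0 - u 1 + u 2 + u 3 - u 4), mul_nonneg hb hd,
      mul_nonneg hc (sub_nonneg.2 hle)]
  · nlinarith [sq_nonneg (u 0 - u 1 + u 2 - u 3 + u 4), mul_nonneg hb he,
      mul_nonneg ha (sub_nonneg.2 hle)]

/-- A rank factorisation of `rhoHN`. -/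
noncomputable def bMat : Matrix (Fin 3) (Fin 5) ℂ :=
  (3 : ℂ)⁻¹ • !![1, 1, 0, 0, 1; 0, 1, 1, 0, -1; 0, 0, 1, 1, 1]

private lemma rho_factor : rhoHN = bMat.conjTranspose * bMat := by
  ext i j
  fin_cases i <;> fin_cases j <;>
    simp [rhoHN, bMat, Matrix.mul_apply, Fin.sum_univ_three, Matrix.conjTranspose_apply,
      Matrix.vecHead, Matrix.vecTail] <;>
    norm_num [Complex.ext_iff]

private lemma horn_rho_trace :
    ((hornMatrix.map (fun x : ℝ => (x : ℂ))) * rhoHN).trace = -(1 / 9) := by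
  simp [Matrix.trace, Matrix.mul_apply, Fin.sum_univ_five, hornMatrix, rhoHN, Matrix.diag,
    Matrix.vecHead, Matrix.vecTail]
  norm_num [Complex.ext_iff]

/-- The Horn matrix is copositive; the matrix `ρ` above is a doubly
non-negative density matrix with `Tr(W₁ ρ) = -1/9 < 0`, hence `ρ` is not a completely
positive matrix. -/
theorem statement_19 :
    (∀ u : Fin 5 → ℝ, (∀ i, 0 ≤ u i) → 0 ≤ u ⬝ᵥ (hornMatrix.mulVec u)) ∧
    IsDNNMatrix rhoHN ∧ rhoHN.trace = 1 ∧
    ((hornMatrix.map (fun x : ℝ => (x : ℂ))) * rhoHN).trace = -(1 / 9) ∧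
    ¬ IsCPMatrix rhoHN := by
  refine ⟨horn_copos, ⟨by rw [rho_factor]; exact Matrix.posSemidef_conjTranspose_mul_self _,
    ?_⟩, ?_, horn_rho_trace, ?_⟩
  · intro i j
    fin_cases i <;> fin_cases j <;>
      simp [rhoHN, Complex.le_def, Matrix.vecHead, Matrix.vecTail]
  · simp [Matrix.trace, rhoHN, Fin.sum_univ_five, Matrix.diag, Matrix.vecHead, Matrix.vecTail]
    norm_num [Complex.ext_iff]
  · rintro ⟨k, v, hv, hsum⟩
    set r : Fin k → Fin 5 → ℝ := fun j i => (v j i).re with hr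
    have hvr : ∀ j i, v j i = ((r j i : ℝ) : ℂ) := by
      intro j i
      have h := hv j i
      rw [Complex.le_def] at h
      exact Complex.ext (by simp [hr]) (by simpa [hr] using h.2.symm)
    have hrnn : ∀ j i, 0 ≤ r j i := by
      intro j i
      have h := hv j i
      rw [Complex.le_def] at h
      simpa [hr] using h.1
    have key : ((hornMatrix.map (fun x : ℝ => (x : ℂ))) * rhoHN).trace =
        ((∑ j, r j ⬝ᵥ hornMatrix.mulVec (r j) : ℝ) : ℂ) := by
      rw [hsum, Matrix.mul_sum, Matrix.trace_sum]
      push_cast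
      refine Finset.sum_congr rfl fun j _ => ?_
      simp only [Matrix.trace, Matrix.diag, Matrix.mul_apply, Matrix.vecMulVec_apply,
        Matrix.map_apply, dotProduct, Matrix.mulVec, hvr]
      push_cast
      rw [Fin.sum_univ_five]
      simp only [Fin.sum_univ_five]
      ring
    have hS : (∑ j, r j ⬝ᵥ hornMatrix.mulVec (r j) : ℝ) = -(1 / 9) := by
      have h := congrArg Complex.re (key.symm.trans horn_rho_trace)
      simpa using h
    have hge : 0 ≤ (∑ j, r j ⬝ᵥ hornMatrix.mulVec (r j) : ℝ) :=
      Finset.sum_nonneg fun j _ => horn_copos (r j) (hrnn j)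
    rw [hS] at hge
    norm_num at hge
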